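/- Consider the classical Kostant game on the affine graph D̃_4, consisting of a central vertex v_0 adjacent to four peripheral vertices v_1, v_2, v_3, v_4, starting from the initial configuration (c_0, c_1, c_2, c_3, c_4) = (1,1,1,1,1). Then the game never terminates: for every m ∈ ℕ there exists a valid firing sequence of length m starting from this configuration, i.e., the game admits an infinite sequence of valid moves. -/

import Mathlib

/-! The classical Kostant game on the affine graph `D̃₄`: a star graph with central vertex `0`
adjacent to the four peripheral vertices `1, 2, 3, 4`. -/

/-- The neighbors of a vertex in the star graph `D̃₄`. -/
def nbrsD4 (v : Fin 5) : Finset (Fin 5) :=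
  if v = 0 then {1, 2, 3, 4} else {0}

/-- Vertex `v` is sad in the configuration `c`: `c v < (1/2) ∑_{u ∈ N(v)} c u`. -/
def SadD4 (c : Fin 5 → ℤ) (v : Fin 5) : Prop :=
  2 * c v < ∑ u ∈ nbrsD4 v, c u

/-- Firing the vertex `v`: replace `c v` by `∑_{u ∈ N(v)} c u − c v`. -/
def fireD4 (c : Fin 5 → ℤ) (v : Fin 5) : Fin 5 → ℤ :=
  Function.update c v ((∑ u ∈ nbrsD4 v, c u) - c v)

/-- `ValidD4From c l`: starting from the configuration `c`, the sequence `l` fires a sad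
vertex at each step. -/
def ValidD4From : (Fin 5 → ℤ) → List (Fin 5) → Prop
  | _, [] => True
  | c, v :: l => SadD4 c v ∧ ValidD4From (fireD4 c v) l

/-!
From `(2b - 1, b, b, b, b)` every vertex is sad in turn along the round `0, 1, 2, 3, 4`:
the centre becomes `4b - (2b - 1) = 2b + 1`, and then each leaf `b < (2b + 1) / 2` becomes
`b + 1`. The round thus leads to `(2(b + 1) - 1, b + 1, b + 1, b + 1, b + 1)`, so from
`(1, 1, 1, 1, 1)` (the case `b = 1`) rounds can be repeated forever.
-/

theorem sum_nbrsD4_zero (c : Fin 5 → ℤ) :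
    ∑ u ∈ nbrsD4 0, c u = c 1 + c 2 + c 3 + c 4 := by
  simp [nbrsD4, Finset.sum_insert, add_assoc]

theorem sum_nbrsD4_of_ne_zero (c : Fin 5 → ℤ) {v : Fin 5} (hv : v ≠ 0) :
    ∑ u ∈ nbrsD4 v, c u = c 0 := by
  simp [nbrsD4, hv]

theorem validD4From_append_iff (c : Fin 5 → ℤ) (l₁ l₂ : List (Fin 5)) :
    ValidD4From c (l₁ ++ l₂) ↔ ValidD4From c l₁ ∧ ValidD4From (l₁.foldl fireD4 c) l₂ := by
  induction l₁ generalizing c with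
  | nil => simp [ValidD4From]
  | cons v l ih => simp only [List.cons_append, ValidD4From, ih, List.foldl_cons, and_assoc]

theorem ValidD4From.take {c : Fin 5 → ℤ} {l : List (Fin 5)} (h : ValidD4From c l) (n : ℕ) :
    ValidD4From c (l.take n) := by
  rw [← List.take_append_drop n l, validD4From_append_iff] at h
  exact h.1

def stageD4 (b : ℤ) : Fin 5 → ℤ := ![2 * b - 1, b, b, b, b]

def roundD4 : List (Fin 5) := [0, 1, 2, 3, 4]

theorem validD4From_stageD4_round (b : ℤ) : ValidD4From (stageD4 b) roundD4 := by
  simp only [stageD4, roundD4, ValidD4From, SadD4, fireD4, sum_nbrsD4_zero, sum_nbrsD4_of_ne_zero,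
    Matrix.cons_val_zero, Matrix.cons_val_one, Matrix.cons_val, Function.update_self,
    Function.update_of_ne, ne_eq, Fin.reduceEq, not_false_eq_true, and_true]
  omega

theorem foldl_fireD4_stageD4_round (b : ℤ) :
    roundD4.foldl fireD4 (stageD4 b) = stageD4 (b + 1) := by
  funext v
  fin_cases v <;>
    simp only [stageD4, roundD4, List.foldl_cons, List.foldl_nil, fireD4, sum_nbrsD4_zero,
      sum_nbrsD4_of_ne_zero, Matrix.cons_val_zero, Matrix.cons_val_one, Matrix.cons_val,
      Function.update_self, Function.update_of_ne, ne_eq, Fin.reduceEq, not_false_eq_true,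
      Fin.zero_eta, Fin.mk_one, Fin.reduceFinMk] <;>
    ring

theorem validD4From_stageD4_replicate_round (n : ℕ) (b : ℤ) :
    ValidD4From (stageD4 b) (List.replicate n roundD4).flatten := by
  induction n generalizing b with
  | zero => trivial
  | succ n ih =>
    rw [List.replicate_succ, List.flatten_cons, validD4From_append_iff,
      foldl_fireD4_stageD4_round]
    exact ⟨validD4From_stageD4_round b, ih (b + 1)⟩

theorem stageD4_one : stageD4 1 = fun _ => 1 := by
  funext v
  fin_cases v <;> rfl

/-- The classical Kostant game on the affine graph `D̃₄`, started from the
configuration `(1,1,1,1,1)`, never terminates: there are valid firing sequences of every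
length, i.e. the game admits an infinite sequence of valid moves. -/
theorem statement19 :
    ∀ m : ℕ, ∃ l : List (Fin 5), l.length = m ∧ ValidD4From (fun _ => 1) l := by
  intro m
  let rounds := (List.replicate m roundD4).flatten
  have h_length : m ≤ rounds.length := by
    simp only [rounds, roundD4, List.length_flatten, List.map_replicate, List.length_cons,
      List.length_nil, List.sum_replicate, smul_eq_mul]
    omega
  refine ⟨rounds.take m, List.length_take_of_le h_length, ?_⟩
  rw [← stageD4_one]
  exact (validD4From_stageD4_replicate_round m 1).take m
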